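/- Under the hypotheses of the previous two results (r ≥ 2d+2 hidden neurons, X = [x_1^{⊗2},...,x_n^{⊗2}] of full column rank with σ_min(X) ≥ σ), if λ_min(∇²f(W)) ≥ −ε then f(W) ≤ n d ε² / (4σ²). In particular every second-order stationary point of f is a global minimum with f(W) = 0. -/

import Mathlib

/-!
Fix a sign `s = ±1`. The at least `d + 1` neurons with `aᵢ = s` have linearly dependent weights,
say `∑ cᵢ wᵢ = 0` with `c ≠ 0`. In the direction `Zᵢ = cᵢ v` the Gauss–Newton part of the
Hessian vanishes, so the Hessian bound reads `-ε ‖c‖² ‖v‖² ≤ s ‖c‖² vᵀ M v`. Using both signs,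
`|vᵀ M v| ≤ ε ‖v‖²`, so every eigenvalue of the symmetric matrix `M` lies in `[-ε, ε]` and
`‖M‖_F² ≤ d ε²`. Since `vec M = (1/n) X δ`, the singular value bound gives
`σ² ‖δ‖² ≤ n² ‖M‖_F²`, i.e. `f = ‖δ‖² / (4n) ≤ n d ε² / (4σ²)`; `ε = 0` gives the second claim.
-/

open Finset Matrix Module

lemma exists_ne_zero_sum_smul_eq_zero_of_finrank_lt_card {K V ι : Type*} [Field K]
    [AddCommGroup V] [Module K V] [FiniteDimensional K V] [Fintype ι]
    (w : ι → V) {S : Finset ι} (hS : finrank K V < #S) :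
    ∃ c : ι → K, c ≠ 0 ∧ (∀ i, c i ≠ 0 → i ∈ S) ∧ ∑ i, c i • w i = 0 := by
  classical
  have hdep : ¬ LinearIndepOn K w (S : Set ι) := fun h =>
    hS.not_ge (by simpa using h.linearIndependent.fintype_card_le_finrank)
  obtain ⟨f, hf, i, hiS, hfi⟩ : ∃ f : ι → K, ∑ i ∈ S, f i • w i = 0 ∧ ∃ i ∈ S, f i ≠ 0 := by
    simpa [linearIndepOn_finset_iff] using hdep
  refine ⟨fun i => if i ∈ S then f i else 0, fun h => hfi ?_, fun i hi => ?_, ?_⟩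
  · simpa [hiS] using congrFun h i
  · by_contra h; exact hi (if_neg h)
  · simpa [ite_smul, sum_ite_mem] using hf

namespace Matrix.IsHermitian

variable {κ : Type*} [Fintype κ] {M : Matrix κ κ ℝ}

lemma trace_mul_self_eq_sum_sq_eigenvalues [DecidableEq κ] (hM : M.IsHermitian) :
    (M * M).trace = ∑ i, hM.eigenvalues i ^ 2 := by
  conv_lhs => rw [hM.spectral_theorem, ← map_mul, Unitary.conjStarAlgAut_apply, trace_mul_cycle,
    Unitary.coe_star_mul_self, one_mul, diagonal_mul_diagonal, trace_diagonal]
  simp [sq]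

lemma abs_eigenvalues_le [DecidableEq κ] (hM : M.IsHermitian) {ε : ℝ}
    (h : ∀ v, |v ⬝ᵥ M *ᵥ v| ≤ ε * ∑ k, v k ^ 2) (i : κ) : |hM.eigenvalues i| ≤ ε := by
  have hnorm : ∑ k, hM.eigenvectorBasis i k ^ 2 = 1 := by
    simpa [EuclideanSpace.norm_sq_eq, hM.eigenvectorBasis.orthonormal.1 i] using
      (EuclideanSpace.norm_sq_eq (hM.eigenvectorBasis i)).symm
  have heig := hM.eigenvalues_eq i
  simp only [star_trivial, RCLike.re_to_real] at heig
  simpa [heig, hnorm] using h (hM.eigenvectorBasis i)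

lemma sum_sq_le_of_abs_dotProduct_mulVec_le (hM : M.IsHermitian) {ε : ℝ}
    (h : ∀ v, |v ⬝ᵥ M *ᵥ v| ≤ ε * ∑ k, v k ^ 2) :
    ∑ k, ∑ l, M k l ^ 2 ≤ Fintype.card κ * ε ^ 2 := by
  classical
  have htrace : ∑ k, ∑ l, M k l ^ 2 = (M * M).trace := by
    simp only [trace, Matrix.diag, mul_apply, sq]
    refine sum_congr rfl fun k _ => sum_congr rfl fun l _ => ?_
    rw [← star_trivial (M l k), hM.apply]
  calc ∑ k, ∑ l, M k l ^ 2 = ∑ i, hM.eigenvalues i ^ 2 := by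
        rw [htrace, hM.trace_mul_self_eq_sum_sq_eigenvalues]
    _ ≤ ∑ _i : κ, ε ^ 2 := sum_le_sum fun i _ =>
        sq_abs (hM.eigenvalues i) ▸ pow_le_pow_left₀ (abs_nonneg _) (hM.abs_eigenvalues_le h i) 2
    _ = Fintype.card κ * ε ^ 2 := by simp

end Matrix.IsHermitian

section HessianForm

variable {ι κ J : Type*} [Fintype ι] [Fintype κ] [Fintype J]

/-- `∇²f(W)[Z, Z]`, where `M = (1/n) ∑ⱼ δⱼ xⱼ xⱼᵀ` is built from the residuals `δ` and
`C = 2/n`. -/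
def hessianForm (a : ι → ℝ) (W : ι → κ → ℝ) (x : J → κ → ℝ) (M : Matrix κ κ ℝ) (C : ℝ)
    (Z : ι → κ → ℝ) : ℝ :=
  ∑ i, a i * (Z i ⬝ᵥ M *ᵥ Z i) + C * ∑ j, (∑ i, a i * (W i ⬝ᵥ x j) * (x j ⬝ᵥ Z i)) ^ 2

variable {a : ι → ℝ} {W : ι → κ → ℝ} {x : J → κ → ℝ} {M : Matrix κ κ ℝ} {C : ℝ}

lemma hessianForm_smul_of_sum_smul_eq_zero {c : ι → ℝ} {s : ℝ} (hW : ∑ i, c i • W i = 0)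
    (ha : ∀ i, c i ≠ 0 → a i = s) (v : κ → ℝ) :
    hessianForm a W x M C (fun i => c i • v) = s * (∑ i, c i ^ 2) * (v ⬝ᵥ M *ᵥ v) := by
  have hac : ∀ i, a i * c i = s * c i := fun i => by
    by_cases h : c i = 0
    · simp [h]
    · rw [ha i h]
  have hcross : ∀ j, ∑ i, a i * (W i ⬝ᵥ x j) * (x j ⬝ᵥ c i • v) = 0 := fun j => by
    calc ∑ i, a i * (W i ⬝ᵥ x j) * (x j ⬝ᵥ c i • v)
        = s * (x j ⬝ᵥ v) * ((∑ i, c i • W i) ⬝ᵥ x j) := by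
          simp only [dotProduct_smul, sum_dotProduct, smul_dotProduct, mul_sum, smul_eq_mul]
          refine sum_congr rfl fun i _ => ?_
          linear_combination (W i ⬝ᵥ x j) * (x j ⬝ᵥ v) * hac i
      _ = 0 := by rw [hW, zero_dotProduct, mul_zero]
  simp only [hessianForm, hcross, zero_pow two_ne_zero, sum_const_zero, mul_zero, add_zero]
  simp only [mulVec_smul, dotProduct_smul, smul_dotProduct, smul_eq_mul, mul_assoc, sum_mul,
    mul_sum]
  refine sum_congr rfl fun i _ => ?_
  linear_combination c i * (v ⬝ᵥ M *ᵥ v) * hac i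

lemma neg_mul_sum_sq_le_mul_dotProduct_mulVec {ε s : ℝ}
    (hess : ∀ Z, -ε * ∑ i, ∑ k, Z i k ^ 2 ≤ hessianForm a W x M C Z)
    (hs : Fintype.card κ < #{i | a i = s}) (v : κ → ℝ) :
    -ε * ∑ k, v k ^ 2 ≤ s * (v ⬝ᵥ M *ᵥ v) := by
  obtain ⟨c, hc0, hcS, hW⟩ :=
    exists_ne_zero_sum_smul_eq_zero_of_finrank_lt_card (K := ℝ) W (by simpa using hs)
  obtain ⟨i, hi⟩ : ∃ i, c i ≠ 0 := Function.ne_iff.1 hc0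
  have hc_pos : 0 < ∑ i, c i ^ 2 :=
    sum_pos' (fun i _ => sq_nonneg _) ⟨i, mem_univ _, by positivity⟩
  have hZ := hess (fun i => c i • v)
  rw [hessianForm_smul_of_sum_smul_eq_zero hW (fun i hi => by simpa using hcS i hi)] at hZ
  have hnorm : ∑ i, ∑ k, (c i • v) k ^ 2 = (∑ i, c i ^ 2) * ∑ k, v k ^ 2 := by
    simp only [Pi.smul_apply, smul_eq_mul, mul_pow, sum_mul_sum]
  rw [hnorm] at hZ
  nlinarith

lemma abs_dotProduct_mulVec_le_of_hessianForm_ge {ε : ℝ}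
    (hess : ∀ Z, -ε * ∑ i, ∑ k, Z i k ^ 2 ≤ hessianForm a W x M C Z)
    (hpos : Fintype.card κ < #{i | a i = 1}) (hneg : Fintype.card κ < #{i | a i = -1})
    (v : κ → ℝ) : |v ⬝ᵥ M *ᵥ v| ≤ ε * ∑ k, v k ^ 2 :=
  abs_le.2 ⟨by linarith [neg_mul_sum_sq_le_mul_dotProduct_mulVec hess hpos v],
    by linarith [neg_mul_sum_sq_le_mul_dotProduct_mulVec hess hneg v]⟩

end HessianForm

lemma card_filter_eq_one_and_card_filter_eq_neg_one {r : ℕ} {a : Fin r → ℝ}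
    (ha : ∀ i, a i = if (i : ℕ) < r / 2 then 1 else -1) :
    #{i | a i = 1} = r / 2 ∧ #{i | a i = -1} = r - r / 2 := by
  have hsign : ∀ i : Fin r, (a i = 1 ↔ (i : ℕ) < r / 2) ∧ (a i = -1 ↔ ¬(i : ℕ) < r / 2) :=
    fun i => by rw [ha]; split_ifs <;> norm_num [*]
  have hsplit := card_filter_add_card_filter_not (s := univ) fun i : Fin r => (i : ℕ) < r / 2
  rw [Fin.card_filter_val_lt, card_univ, Fintype.card_fin, min_eq_right (Nat.div_le_self r 2)]
    at hsplit
  rw [filter_congr fun i _ => (hsign i).1, filter_congr fun i _ => (hsign i).2,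
    Fin.card_filter_val_lt, min_eq_right (Nat.div_le_self r 2)]
  omega

lemma sum_sq_eq_sq_mul_sum_sq_mulVec {κ J : Type*} [Fintype κ] [Fintype J] {x : J → κ → ℝ}
    {δ : J → ℝ} {X : Matrix (κ × κ) J ℝ} (hX : ∀ k l j, X (k, l) j = x j k * x j l)
    {M : Matrix κ κ ℝ} {c : ℝ} (hM : ∀ k l, M k l = c * ∑ j, δ j * x j k * x j l) :
    ∑ k, ∑ l, M k l ^ 2 = c ^ 2 * ∑ q, (X *ᵥ δ) q ^ 2 := by
  have hentry : ∀ k l, M k l = c * (X *ᵥ δ) (k, l) := fun k l => by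
    simp only [hM, mulVec, dotProduct, hX]
    exact congrArg _ (sum_congr rfl fun j _ => by ring)
  simp only [Fintype.sum_prod_type, hentry, mul_pow, mul_sum]

theorem stmt_12_general (d r n : ℕ) (hn : 0 < n)
    (hr : 2 * d + 2 ≤ r)
    (a : Fin r → ℝ) (ha : ∀ i, a i = if (i : ℕ) < r / 2 then 1 else -1)
    (x : Fin n → Fin d → ℝ) (W : Fin r → Fin d → ℝ)
    (δ : Fin n → ℝ)
    (fW : ℝ) (hf : fW = (1 / (4 * (n : ℝ))) * ∑ j, δ j ^ 2)
    (X : Matrix (Fin d × Fin d) (Fin n) ℝ)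
    (hX : ∀ k l j, X (k, l) j = x j k * x j l)
    (M : Matrix (Fin d) (Fin d) ℝ)
    (hM : ∀ k l, M k l = (1 / (n : ℝ)) * ∑ j, δ j * x j k * x j l)
    (Q : (Fin r → Fin d → ℝ) → ℝ)
    (hQ : ∀ Z, Q Z = (∑ k, a k * ∑ k1, ∑ k2, Z k k1 * M k1 k2 * Z k k2)
      + (2 / (n : ℝ)) * ∑ j,
          (∑ i, a i * (∑ k, W i k * x j k) * (∑ k, x j k * Z i k)) ^ 2)
    (σ : ℝ) (hσ : 0 < σ)
    (hXσ : ∀ v : Fin n → ℝ,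
      σ * Real.sqrt (∑ j, v j ^ 2) ≤ Real.sqrt (∑ q, (X.mulVec v) q ^ 2))
    (ε : ℝ)
    (hhess : ∀ Z : Fin r → Fin d → ℝ, -ε * (∑ i, ∑ k, Z i k ^ 2) ≤ Q Z) :
    fW ≤ (n : ℝ) * d * ε ^ 2 / (4 * σ ^ 2) ∧
      ((∀ Z : Fin r → Fin d → ℝ, 0 ≤ Q Z) → fW = 0) := by
  have hn' : (0 : ℝ) < n := Nat.cast_pos.2 hn
  have hQ_eq : ∀ Z, Q Z = hessianForm a W x M (2 / n) Z := fun Z => by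
    simp only [hQ, hessianForm, dotProduct, mulVec, mul_sum, mul_assoc]
  obtain ⟨hpos, hneg⟩ := card_filter_eq_one_and_card_filter_eq_neg_one ha
  have hM_herm : M.IsHermitian := by
    ext k l
    simp only [conjTranspose_apply, star_trivial, hM]
    exact congrArg _ (sum_congr rfl fun j _ => by ring)
  have hσδ : σ ^ 2 * ∑ j, δ j ^ 2 ≤ n ^ 2 * ∑ k, ∑ l, M k l ^ 2 := by
    rw [sum_sq_eq_sq_mul_sum_sq_mulVec hX hM, ← mul_assoc, ← mul_pow, mul_one_div_cancel hn'.ne',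
      one_pow, one_mul, ← Real.sq_sqrt (sum_nonneg fun j _ => sq_nonneg (δ j)), ← mul_pow]
    exact (Real.le_sqrt (by positivity) (by positivity)).1 (hXσ δ)
  have hloss : ∀ ε', (∀ Z : Fin r → Fin d → ℝ, -ε' * (∑ i, ∑ k, Z i k ^ 2) ≤ Q Z) →
      fW ≤ (n : ℝ) * d * ε' ^ 2 / (4 * σ ^ 2) := by
    intro ε' hess
    simp only [hQ_eq] at hess
    have hF := hM_herm.sum_sq_le_of_abs_dotProduct_mulVec_le
      (abs_dotProduct_mulVec_le_of_hessianForm_ge hess (by rw [Fintype.card_fin]; omega)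
        (by rw [Fintype.card_fin]; omega))
    rw [Fintype.card_fin] at hF
    rw [hf, le_div_iff₀ (by positivity)]
    field_simp
    linarith [hσδ, mul_le_mul_of_nonneg_left hF (sq_nonneg (n : ℝ))]
  exact ⟨hloss ε hhess, fun hpsd => le_antisymm (by simpa using hloss 0 (by simpa using hpsd))
    (by rw [hf]; positivity)⟩

/-- Landscape result: with `r ≥ 2d+2` and `σ_min(X) ≥ σ > 0`, if
`λ_min(∇²f(W)) ≥ −ε` (i.e. the Hessian quadratic form satisfies
`Q(Z) ≥ −ε‖Z‖_F²`), then `f(W) ≤ n d ε²/(4σ²)`; in particular, if the Hessian is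
positive semidefinite (second-order stationarity) then `f(W) = 0`. -/
theorem stmt_12 (d r n : ℕ) (hd : 0 < d) (hn : 0 < n)
    (hr : 2 * d + 2 ≤ r) (hre : Even r)
    (a : Fin r → ℝ) (ha : ∀ i, a i = if (i : ℕ) < r / 2 then 1 else -1)
    (x : Fin n → Fin d → ℝ) (y : Fin n → ℝ) (W : Fin r → Fin d → ℝ)
    (δ : Fin n → ℝ)
    (hδ : ∀ j, δ j = (∑ i, a i * (∑ k, W i k * x j k) ^ 2) - y j)
    (fW : ℝ) (hf : fW = (1 / (4 * (n : ℝ))) * ∑ j, δ j ^ 2)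
    (X : Matrix (Fin d × Fin d) (Fin n) ℝ)
    (hX : ∀ k l j, X (k, l) j = x j k * x j l)
    (M : Matrix (Fin d) (Fin d) ℝ)
    (hM : ∀ k l, M k l = (1 / (n : ℝ)) * ∑ j, δ j * x j k * x j l)
    (Q : (Fin r → Fin d → ℝ) → ℝ)
    (hQ : ∀ Z, Q Z = (∑ k, a k * ∑ k1, ∑ k2, Z k k1 * M k1 k2 * Z k k2)
      + (2 / (n : ℝ)) * ∑ j,
          (∑ i, a i * (∑ k, W i k * x j k) * (∑ k, x j k * Z i k)) ^ 2)
    (σ : ℝ) (hσ : 0 < σ)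
    (hXσ : ∀ v : Fin n → ℝ,
      σ * Real.sqrt (∑ j, v j ^ 2) ≤ Real.sqrt (∑ q, (X.mulVec v) q ^ 2))
    (ε : ℝ) (hε : 0 ≤ ε)
    (hhess : ∀ Z : Fin r → Fin d → ℝ, -ε * (∑ i, ∑ k, Z i k ^ 2) ≤ Q Z) :
    fW ≤ (n : ℝ) * d * ε ^ 2 / (4 * σ ^ 2) ∧
      ((∀ Z : Fin r → Fin d → ℝ, 0 ≤ Q Z) → fW = 0) :=
  stmt_12_general d r n hn hr a ha x W δ fW hf X hX M hM Q hQ σ hσ hXσ ε hhess
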